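/- Let (X,d) be a compact Ahlfors regular metric space, let {S_1,...,S_N} be an IFS of contracting similarities on X with similarity dimension s, let C ⊆ X be a nonempty compact set such that the IFS together with C satisfies the condensation open set condition, and let F_C be the inhomogeneous attractor with condensation C. Then for all t ≥ 0, lb-dim F_C ≥ p_t(C)·t + (1 − p_t(C))·s. -/

import Mathlib

open Set Filter Topology Metric MeasureTheory

/-- Minimum number of sets of diameter at most `δ` needed to cover `F`. -/
noncomputable def coverN {X : Type*} [MetricSpace X] (F : Set X) (δ : ℝ) : ℕ :=
  sInf {n : ℕ | ∃ U : Fin n → Set X, (∀ i, EMetric.diam (U i) ≤ ENNReal.ofReal δ) ∧ F ⊆ ⋃ i, U i}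

/-- Lower box dimension. -/
noncomputable def lbDim {X : Type*} [MetricSpace X] (F : Set X) : ℝ :=
  Filter.liminf (fun δ : ℝ => Real.log (coverN F δ) / (-Real.log δ)) (𝓝[>] 0)

/-- Upper box dimension. -/
noncomputable def ubDim {X : Type*} [MetricSpace X] (F : Set X) : ℝ :=
  Filter.limsup (fun δ : ℝ => Real.log (coverN F δ) / (-Real.log δ)) (𝓝[>] 0)

/-- The `(t,δ)`-covering regularity exponent `p_{t,δ}(C)`. -/
noncomputable def cre {X : Type*} [MetricSpace X] (C : Set X) (t δ : ℝ) : ℝ :=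
  sSup {p : ℝ | 0 ≤ p ∧ p ≤ 1 ∧ δ ^ (-(p * t)) ≤ (coverN C (δ ^ p) : ℝ)}

/-- The `t`-covering regularity exponent `p_t(C)`. -/
noncomputable def creT {X : Type*} [MetricSpace X] (C : Set X) (t : ℝ) : ℝ :=
  Filter.liminf (fun δ : ℝ => cre C t δ) (𝓝[>] 0)

/-!
Fix an exponent `p` admissible at scale `δ`, i.e. `N_{δ^p}(C) ≥ δ^(-p t)`, and put `ρ = δ^(1-p)`.
Cutting the tree of words where the ratio `r_w` first drops below `ρ / r_min` gives a set `Λ` of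
words with `ρ ≤ r_w ≤ ρ / r_min`, and `∑_{w ∈ Λ} r_w ^ s = 1` forces `#Λ ≳ ρ^(-s)`. Each copy
`S_w(C) ⊆ F_C` needs `N_{δ/ρ}(C) = N_{δ^p}(C)` sets of diameter `δ`, while a set of diameter `δ`
meets boundedly many of these copies: the open set condition gives them disjoint pieces `S_w(K)`,
`K ⊆ U`, of measure `≍ ρ^(dim X)` lying in a ball of radius `≍ ρ`, and Ahlfors regularity bounds
their number. Double counting gives `N_δ(F_C) ≳ ρ^(-s) N_{δ^p}(C) ≥ δ^(-((1-p) s + p t))`. Letting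
`p` approach `p_t(C)` from below proves the bound when `s ≤ t`; when `t < s`, the always
admissible `p = 0` suffices.
-/

section CoveringNumber

variable {X : Type*} [MetricSpace X] {A B : Set X} {ρ : ℝ}

theorem exists_fin_cover_of_finset {ι : Type*} {T : Finset ι} {V : ι → Set X}
    (hV : ∀ i ∈ T, ediam (V i) ≤ ENNReal.ofReal ρ) (hA : A ⊆ ⋃ i ∈ T, V i) :
    ∃ U : Fin T.card → Set X, (∀ k, ediam (U k) ≤ ENNReal.ofReal ρ) ∧ A ⊆ ⋃ k, U k := by
  refine ⟨fun k => V (T.equivFin.symm k), fun k => hV _ (T.equivFin.symm k).2, fun x hx => ?_⟩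
  obtain ⟨i, hi, hxi⟩ := mem_iUnion₂.1 (hA hx)
  exact mem_iUnion.2 ⟨T.equivFin ⟨i, hi⟩, by simpa using hxi⟩

theorem coverN_le_card {ι : Type*} {T : Finset ι} {V : ι → Set X}
    (hV : ∀ i ∈ T, ediam (V i) ≤ ENNReal.ofReal ρ) (hA : A ⊆ ⋃ i ∈ T, V i) :
    coverN A ρ ≤ T.card :=
  Nat.sInf_le (exists_fin_cover_of_finset hV hA)

theorem ediam_closedBall_le (x : X) {ε : ℝ} : ediam (closedBall x ε) ≤ ENNReal.ofReal (2 * ε) :=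
  ediam_le_of_forall_dist_le fun y hy z hz => by
    linarith [dist_triangle_right y z x, mem_closedBall.1 hy, mem_closedBall.1 hz]

theorem exists_fin_cover_coverN (hA : IsCompact A) (hρ : 0 < ρ) :
    ∃ U : Fin (coverN A ρ) → Set X, (∀ k, ediam (U k) ≤ ENNReal.ofReal ρ) ∧ A ⊆ ⋃ k, U k := by
  obtain ⟨T, -, hT, hAT⟩ := finite_cover_balls_of_compact hA (half_pos hρ)
  have hcov := exists_fin_cover_of_finset (T := hT.toFinset) (V := fun x => closedBall x (ρ / 2))
    (fun x _ => by simpa [mul_div_cancel₀] using ediam_closedBall_le x (ε := ρ / 2))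
    (by simpa using hAT.trans (iUnion₂_mono fun x _ => ball_subset_closedBall))
  exact Nat.sInf_mem (s := {n : ℕ | ∃ U : Fin n → Set X,
    (∀ i, ediam (U i) ≤ ENNReal.ofReal ρ) ∧ A ⊆ ⋃ i, U i}) ⟨_, hcov⟩

theorem one_le_coverN (hA : IsCompact A) (hne : A.Nonempty) (hρ : 0 < ρ) : 1 ≤ coverN A ρ := by
  obtain ⟨U, -, hcov⟩ := exists_fin_cover_coverN hA hρ
  obtain ⟨k, -⟩ := mem_iUnion.1 (hcov hne.some_mem)
  exact Nat.one_le_iff_ne_zero.2 fun h => (h ▸ k).elim0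

theorem coverN_mono (hB : IsCompact B) (hρ : 0 < ρ) (hAB : A ⊆ B) : coverN A ρ ≤ coverN B ρ := by
  obtain ⟨U, hU, hcov⟩ := exists_fin_cover_coverN hB hρ
  exact Nat.sInf_le ⟨U, hU, hAB.trans hcov⟩

theorem coverN_le_one_of_subsingleton [Subsingleton X] : coverN A ρ ≤ 1 :=
  Nat.sInf_le ⟨fun _ => univ, fun _ => (ediam_subsingleton subsingleton_univ).le.trans zero_le,
    fun x _ => mem_iUnion.2 ⟨0, mem_univ x⟩⟩

open Classical in
theorem coverN_le_card_filter_of_antilipschitz {Y : Type*} [MetricSpace Y] {f : X → Y}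
    {K : NNReal} (hf : AntilipschitzWith K f) {δ : ℝ} (hKδ : K * δ ≤ ρ) {M : ℕ}
    {V : Fin M → Set Y} (hV : ∀ k, ediam (V k) ≤ ENNReal.ofReal δ) (hcov : f '' A ⊆ ⋃ k, V k) :
    coverN A ρ ≤ (Finset.univ.filter fun k => (V k ∩ f '' A).Nonempty).card := by
  refine coverN_le_card (V := fun k => f ⁻¹' V k) (fun k _ => ?_) fun x hx => ?_
  · calc ediam (f ⁻¹' V k) ≤ K * ediam (V k) := hf.ediam_preimage_le _
      _ ≤ ENNReal.ofReal K * ENNReal.ofReal δ := by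
        rw [ENNReal.ofReal_coe_nnreal]
        exact mul_le_mul_right (hV k) _
      _ ≤ ENNReal.ofReal ρ := by
        rw [← ENNReal.ofReal_mul K.coe_nonneg]
        exact ENNReal.ofReal_le_ofReal hKδ
  · obtain ⟨k, hk⟩ := mem_iUnion.1 (hcov (mem_image_of_mem f hx))
    exact mem_biUnion (Finset.mem_filter.2 ⟨Finset.mem_univ k, f x, hk, x, hx, rfl⟩) hk

end CoveringNumber

section BoxDimension

variable {X : Type*} [MetricSpace X] {C F : Set X}

theorem tendsto_log_mul_rpow_div_neg_log {c : ℝ} (hc : 0 < c) (b : ℝ) :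
    Tendsto (fun δ => Real.log (c * δ ^ (-b)) / -Real.log δ) (𝓝[>] 0) (𝓝 b) := by
  have hlog : Tendsto (fun δ => -Real.log δ) (𝓝[>] 0) atTop :=
    tendsto_neg_atBot_atTop.comp Real.tendsto_log_nhdsGT_zero
  have hlim := (tendsto_const_nhds (x := Real.log c)).div_atTop hlog |>.add_const b
  rw [zero_add] at hlim
  refine hlim.congr' ?_
  filter_upwards [Ioo_mem_nhdsGT one_pos] with δ ⟨hδ0, hδ1⟩
  have hlogδ : Real.log δ ≠ 0 := (Real.log_neg hδ0 hδ1).ne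
  rw [Real.log_mul hc.ne' (Real.rpow_pos_of_pos hδ0 _).ne', Real.log_rpow hδ0]
  field_simp
  ring

/-- The upper bound `hup` is needed because `liminf` takes a junk value on sequences that are not
bounded above. -/
theorem le_lbDim_of_mul_rpow_le_coverN {K d c b : ℝ} (hK : 0 < K) (hc : 0 < c)
    (hup : ∀ᶠ δ in 𝓝[>] 0, (coverN F δ : ℝ) ≤ K * δ ^ (-d))
    (hlow : ∀ᶠ δ in 𝓝[>] 0, c * δ ^ (-b) ≤ coverN F δ) : b ≤ lbDim F := by
  have hquot : ∀ᶠ δ in 𝓝[>] 0,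
      Real.log (c * δ ^ (-b)) / -Real.log δ ≤ Real.log (coverN F δ) / -Real.log δ ∧
      Real.log (coverN F δ) / -Real.log δ ≤ Real.log (K * δ ^ (-d)) / -Real.log δ := by
    filter_upwards [hup, hlow, Ioo_mem_nhdsGT one_pos] with δ hu hl ⟨hδ0, hδ1⟩
    have hlogδ : 0 ≤ -Real.log δ := neg_nonneg.2 (Real.log_nonpos hδ0.le hδ1.le)
    have hpos : 0 < c * δ ^ (-b) := by positivity
    exact ⟨div_le_div_of_nonneg_right (Real.log_le_log hpos hl) hlogδ,
      div_le_div_of_nonneg_right (Real.log_le_log (hpos.trans_le hl) hu) hlogδ⟩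
  have hlim := tendsto_log_mul_rpow_div_neg_log hc b
  rw [← hlim.liminf_eq]
  exact liminf_le_liminf (hquot.mono fun _ h => h.1) hlim.isBoundedUnder_ge
    ((tendsto_log_mul_rpow_div_neg_log hK d).isBoundedUnder_le.mono_le
      (hquot.mono fun _ h => h.2)).isCoboundedUnder_flip

variable {t δ : ℝ}

theorem cre_nonneg : 0 ≤ cre C t δ := Real.sSup_nonneg fun _ hp => hp.1

theorem cre_le_one : cre C t δ ≤ 1 := Real.sSup_le (fun _ hp => hp.2.1) zero_le_one

theorem creT_nonneg : 0 ≤ creT C t :=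
  le_liminf_of_le (isBoundedUnder_of ⟨1, fun _ => cre_le_one⟩).isCoboundedUnder_flip
    (Eventually.of_forall fun _ => cre_nonneg)

theorem eventually_exists_gt_of_lt_creT (hC : IsCompact C) (hCne : C.Nonempty) {q : ℝ}
    (hq : q < creT C t) : ∀ᶠ δ in 𝓝[>] 0,
      ∃ p, 0 ≤ p ∧ p ≤ 1 ∧ δ ^ (-(p * t)) ≤ (coverN C (δ ^ p) : ℝ) ∧ q < p := by
  filter_upwards [eventually_lt_of_lt_liminf hq (isBoundedUnder_of ⟨0, fun _ => cre_nonneg⟩)]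
    with δ hδ
  have hzero : (0 : ℝ) ∈ {p : ℝ | 0 ≤ p ∧ p ≤ 1 ∧ δ ^ (-(p * t)) ≤ (coverN C (δ ^ p) : ℝ)} :=
    ⟨le_rfl, zero_le_one, by simpa using one_le_coverN hC hCne one_pos⟩
  obtain ⟨p, ⟨hp0, hp1, hp⟩, hqp⟩ := exists_lt_of_lt_csSup ⟨0, hzero⟩ hδ
  exact ⟨p, hp0, hp1, hp, hqp⟩

theorem creT_mul_add_le_lbDim (hC : IsCompact C) (hCne : C.Nonempty) {K d c s : ℝ}
    (hK : 0 < K) (hup : ∀ᶠ δ in 𝓝[>] 0, (coverN F δ : ℝ) ≤ K * δ ^ (-d)) (hc : 0 < c)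
    (hcount : ∀ δ ρ, 0 < δ → δ ≤ ρ → ρ ≤ 1 →
      c * ρ ^ (-s) * (coverN C (δ / ρ) : ℝ) ≤ coverN F δ) (t : ℝ) :
    creT C t * t + (1 - creT C t) * s ≤ lbDim F := by
  have key : ∀ b, (∀ᶠ δ in 𝓝[>] 0, ∃ p, 0 ≤ p ∧ p ≤ 1 ∧
      δ ^ (-(p * t)) ≤ (coverN C (δ ^ p) : ℝ) ∧ b ≤ p * t + (1 - p) * s) → b ≤ lbDim F := by
    intro b hb
    refine le_lbDim_of_mul_rpow_le_coverN hK hc hup ?_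
    filter_upwards [hb, Ioo_mem_nhdsGT one_pos] with δ ⟨p, hp0, hp1, hadm, hbp⟩ ⟨hδ0, hδ1⟩
    have hρ : δ ^ (1 - p) ≤ 1 := Real.rpow_le_one hδ0.le hδ1.le (by linarith)
    have hδρ : δ ≤ δ ^ (1 - p) := by
      simpa using Real.rpow_le_rpow_of_exponent_ge hδ0 hδ1.le (by linarith : 1 - p ≤ 1)
    have hδp : δ / δ ^ (1 - p) = δ ^ p := by
      nth_rewrite 1 [← Real.rpow_one δ]
      rw [← Real.rpow_sub hδ0, sub_sub_cancel]
    calc c * δ ^ (-b) ≤ c * δ ^ (-(p * t + (1 - p) * s)) :=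
          mul_le_mul_of_nonneg_left
            (Real.rpow_le_rpow_of_exponent_ge hδ0 hδ1.le (neg_le_neg hbp)) hc.le
      _ = c * (δ ^ (1 - p)) ^ (-s) * δ ^ (-(p * t)) := by
          rw [← Real.rpow_mul hδ0.le, mul_assoc, ← Real.rpow_add hδ0]
          ring_nf
      _ ≤ c * (δ ^ (1 - p)) ^ (-s) * (coverN C (δ / δ ^ (1 - p)) : ℝ) := by
          rw [hδp]
          gcongr
      _ ≤ coverN F δ := hcount δ _ hδ0 hδρ hρ
  rcases lt_or_ge t s with hts | hst
  · calc creT C t * t + (1 - creT C t) * s ≤ s := by nlinarith [creT_nonneg (C := C) (t := t)]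
      _ ≤ lbDim F := key s (Eventually.of_forall fun δ =>
          ⟨0, le_rfl, zero_le_one, by simpa using one_le_coverN hC hCne one_pos, by simp⟩)
  · have hlt : ∀ q < creT C t, q * t + (1 - q) * s ≤ lbDim F := fun q hq =>
      key _ <| (eventually_exists_gt_of_lt_creT hC hCne hq).mono fun δ ⟨p, hp0, hp1, hadm, hqp⟩ =>
        ⟨p, hp0, hp1, hadm, by nlinarith⟩
    have hlim : Tendsto (fun q => q * t + (1 - q) * s) (𝓝[<] creT C t)
        (𝓝 (creT C t * t + (1 - creT C t) * s)) :=
      (Continuous.tendsto (by fun_prop) _).mono_left nhdsWithin_le_nhds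
    exact le_of_tendsto hlim (eventually_nhdsWithin_of_forall hlt)

end BoxDimension

section Words

variable {ι X : Type*}

def wordRatio (r : ι → ℝ) (w : List ι) : ℝ := (w.map r).prod

def wordMap (S : ι → X → X) (w : List ι) : X → X := w.foldr (fun i f => S i ∘ f) id

variable {r : ι → ℝ} {S : ι → X → X}

@[simp] theorem wordRatio_nil : wordRatio r [] = 1 := rfl

@[simp] theorem wordRatio_cons (i : ι) (w : List ι) :
    wordRatio r (i :: w) = r i * wordRatio r w := List.prod_cons

@[simp] theorem wordMap_nil : wordMap S [] = id := rfl

@[simp] theorem wordMap_cons (i : ι) (w : List ι) : wordMap S (i :: w) = S i ∘ wordMap S w := rfl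

theorem wordRatio_pos (hr : ∀ i, 0 < r i) (w : List ι) : 0 < wordRatio r w :=
  List.prod_pos fun _ hx => by
    obtain ⟨i, -, rfl⟩ := List.mem_map.1 hx
    exact hr i

theorem dist_wordMap [MetricSpace X] (hS : ∀ i x y, dist (S i x) (S i y) = r i * dist x y)
    (w : List ι) (x y : X) :
    dist (wordMap S w x) (wordMap S w y) = wordRatio r w * dist x y := by
  induction w with
  | nil => simp
  | cons i w ih => simp [hS, ih, mul_assoc]

theorem mapsTo_wordMap {U : Set X} (hU : ∀ i, MapsTo (S i) U U) (w : List ι) :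
    MapsTo (wordMap S w) U U := by
  induction w with
  | nil => exact mapsTo_id U
  | cons i w ih => exact (hU i).comp ih

end Words

section CutSet

variable {ι : Type*} [Fintype ι] [DecidableEq ι]

/-- The cut of the tree of words at scale `θ`: the words `w` with `wordRatio r w ≤ θ` all of whose
proper prefixes have ratio `> θ`. Only words of length `≤ n` are produced, which loses nothing
once `R ^ n < θ` for an upper bound `R` of the ratios. -/
noncomputable def cutSet (r : ι → ℝ) : ℕ → ℝ → Finset (List ι)
  | 0, θ => if 1 ≤ θ then {[]} else ∅
  | n + 1, θ => if 1 ≤ θ then {[]} else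
      Finset.univ.biUnion fun i => (cutSet r n (θ / r i)).image (i :: ·)

variable {r : ι → ℝ} {θ : ℝ}

theorem cutSet_of_one_le (h : 1 ≤ θ) (n : ℕ) : cutSet r n θ = {[]} := by
  cases n <;> simp [cutSet, h]

theorem cutSet_succ_of_lt_one (h : θ < 1) (n : ℕ) :
    cutSet r (n + 1) θ = Finset.univ.biUnion fun i => (cutSet r n (θ / r i)).image (i :: ·) := by
  simp [cutSet, h.not_ge]

theorem mem_cutSet_induction {P : ℝ → List ι → Prop} (nil : ∀ θ, 1 ≤ θ → P θ [])
    (cons : ∀ θ i u, θ < 1 → P (θ / r i) u → P θ (i :: u)) :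
    ∀ n θ w, w ∈ cutSet r n θ → P θ w
  | n, θ, w, hw => by
    rcases le_or_gt 1 θ with h | h
    · rw [cutSet_of_one_le h, Finset.mem_singleton] at hw
      exact hw ▸ nil θ h
    cases n with
    | zero => simp [cutSet, h.not_ge] at hw
    | succ n =>
      rw [cutSet_succ_of_lt_one h] at hw
      simp only [Finset.mem_biUnion, Finset.mem_image] at hw
      obtain ⟨i, -, u, hu, rfl⟩ := hw
      exact cons θ i u h (mem_cutSet_induction nil cons n _ u hu)

theorem wordRatio_le_of_mem_cutSet (hr : ∀ i, 0 < r i) {n : ℕ} {w : List ι}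
    (hw : w ∈ cutSet r n θ) : wordRatio r w ≤ θ := by
  refine mem_cutSet_induction (P := fun θ w => wordRatio r w ≤ θ) (fun θ h => by simpa using h)
    (fun θ i u _ hu => ?_) n θ w hw
  rw [wordRatio_cons]
  calc r i * wordRatio r u ≤ r i * (θ / r i) := by gcongr; exact (hr i).le
    _ = θ := mul_div_cancel₀ θ (hr i).ne'

theorem min_le_wordRatio_of_mem_cutSet (hr : ∀ i, 0 < r i) {κ : ℝ} (hκ : 0 ≤ κ)
    (hκr : ∀ i, κ ≤ r i) {n : ℕ} {w : List ι} (hw : w ∈ cutSet r n θ) :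
    min (κ * θ) 1 ≤ wordRatio r w := by
  refine mem_cutSet_induction (P := fun θ w => min (κ * θ) 1 ≤ wordRatio r w)
    (fun θ _ => by simp) (fun θ i u hθ hu => ?_) n θ w hw
  rw [wordRatio_cons]
  calc min (κ * θ) 1 ≤ min (κ * θ) (r i) := by
        exact le_min (min_le_left _ _)
          ((min_le_left _ _).trans ((mul_le_of_le_one_right hκ hθ.le).trans (hκr i)))
    _ = r i * min (κ * (θ / r i)) 1 := by
        have : r i * (κ * (θ / r i)) = κ * θ := by field_simp [(hr i).ne']
        rw [mul_min_of_nonneg _ _ (hr i).le, mul_one, this]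
    _ ≤ r i * wordRatio r u := by gcongr; exact (hr i).le

theorem wordRatio_mem_Icc_of_mem_cutSet (hr : ∀ i, 0 < r i) {κ : ℝ} (hκ : 0 < κ)
    (hκr : ∀ i, κ ≤ r i) {ρ : ℝ} (hρ : ρ ≤ 1) {n : ℕ} {w : List ι}
    (hw : w ∈ cutSet r n (ρ / κ)) : ρ ≤ wordRatio r w ∧ wordRatio r w ≤ ρ / κ := by
  refine ⟨?_, wordRatio_le_of_mem_cutSet hr hw⟩
  simpa [mul_div_cancel₀ _ hκ.ne', hρ] using min_le_wordRatio_of_mem_cutSet hr hκ.le hκr hw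

theorem sum_cutSet_rpow (hr : ∀ i, 0 < r i) {R s : ℝ} (hR : ∀ i, r i ≤ R)
    (hsum : ∑ i, r i ^ s = 1) : ∀ n θ, R ^ n < θ → ∑ w ∈ cutSet r n θ, wordRatio r w ^ s = 1
  | 0, θ, h => by rw [cutSet_of_one_le (by simpa using h.le)]; simp
  | n + 1, θ, h => by
    rcases le_or_gt 1 θ with h1 | h1
    · rw [cutSet_of_one_le h1]; simp
    rw [cutSet_succ_of_lt_one h1, Finset.sum_biUnion, ← hsum]
    · refine Finset.sum_congr rfl fun i _ => ?_
      have hRn : R ^ n < θ / r i := by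
        rw [lt_div_iff₀ (hr i)]
        calc R ^ n * r i ≤ R ^ n * R := by
              gcongr
              exacts [pow_nonneg ((hr i).trans_le (hR i)).le n, hR i]
          _ < θ := by rwa [← pow_succ]
      rw [Finset.sum_image (fun _ _ _ _ h => List.cons_injective h)]
      simp_rw [wordRatio_cons, Real.mul_rpow (hr i).le (wordRatio_pos hr _).le]
      rw [← Finset.mul_sum, sum_cutSet_rpow hr hR hsum n _ hRn, mul_one]
    · intro i _ j _ hij
      simp only [Function.onFun, Finset.disjoint_left, Finset.mem_image]
      rintro _ ⟨u, -, rfl⟩ ⟨v, -, h⟩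
      exact hij (List.cons.inj h).1.symm

theorem rpow_neg_le_card_cutSet (hr : ∀ i, 0 < r i) {R s : ℝ} (hR : ∀ i, r i ≤ R)
    (hsum : ∑ i, r i ^ s = 1) (hs : 0 ≤ s) {n : ℕ} (hθ : 0 < θ) (hn : R ^ n < θ) :
    θ ^ (-s) ≤ (cutSet r n θ).card := by
  have h1 : 1 ≤ (cutSet r n θ).card * θ ^ s := by
    calc (1 : ℝ) = ∑ w ∈ cutSet r n θ, wordRatio r w ^ s :=
          (sum_cutSet_rpow hr hR hsum n θ hn).symm
      _ ≤ ∑ w ∈ cutSet r n θ, θ ^ s := Finset.sum_le_sum fun w hw =>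
          Real.rpow_le_rpow (wordRatio_pos hr w).le (wordRatio_le_of_mem_cutSet hr hw) hs
      _ = (cutSet r n θ).card * θ ^ s := by rw [Finset.sum_const, nsmul_eq_mul]
  rwa [Real.rpow_neg hθ.le, inv_le_iff_one_le_mul₀ (Real.rpow_pos_of_pos hθ s)]

end CutSet

section Similarity

variable {X Y : Type*} [MetricSpace X] [MetricSpace Y] {f : X → Y} {c : ℝ}

theorem lipschitzWith_of_dist_eq (hc : 0 ≤ c) (hf : ∀ x y, dist (f x) (f y) = c * dist x y) :
    LipschitzWith c.toNNReal f :=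
  LipschitzWith.of_dist_le_mul fun x y => by rw [hf, Real.coe_toNNReal _ hc]

theorem antilipschitzWith_of_dist_eq (hc : 0 < c) (hf : ∀ x y, dist (f x) (f y) = c * dist x y) :
    AntilipschitzWith c⁻¹.toNNReal f :=
  AntilipschitzWith.of_le_mul_dist fun x y => by
    rw [hf, Real.coe_toNNReal _ (inv_nonneg.2 hc.le), inv_mul_cancel_left₀ hc.ne']

theorem ofReal_rpow_mul_hausdorffMeasure_le [MeasurableSpace X] [BorelSpace X]
    [MeasurableSpace Y] [BorelSpace Y] {d : ℝ} (hc : 0 < c) (hd : 0 ≤ d)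
    (hf : ∀ x y, dist (f x) (f y) = c * dist x y) (A : Set X) :
    ENNReal.ofReal (c ^ d) * μH[d] A ≤ μH[d] (f '' A) := by
  have hcancel : ENNReal.ofReal (c ^ d) * (c⁻¹.toNNReal : ENNReal) ^ d = 1 := by
    rw [← ENNReal.ofReal.eq_1 c⁻¹, ENNReal.ofReal_rpow_of_pos (inv_pos.2 hc),
      ← ENNReal.ofReal_mul (by positivity), Real.inv_rpow hc.le, mul_inv_cancel₀ (by positivity),
      ENNReal.ofReal_one]
  calc ENNReal.ofReal (c ^ d) * μH[d] A
      ≤ ENNReal.ofReal (c ^ d) * ((c⁻¹.toNNReal : ENNReal) ^ d * μH[d] (f '' A)) :=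
        mul_le_mul_right ((antilipschitzWith_of_dist_eq hc hf).le_hausdorffMeasure_image hd A) _
    _ = μH[d] (f '' A) := by rw [← mul_assoc, hcancel, one_mul]

theorem range_subset_closedBall_of_dist_eq [CompactSpace X]
    (hf : ∀ x y, dist (f x) (f y) = c * dist x y) (hc : 0 ≤ c) {V : Set Y} {ρ : ℝ} (hρ : 0 ≤ ρ)
    (hV : ediam V ≤ ENNReal.ofReal ρ) {z : Y} (hz : z ∈ V) (hVf : (V ∩ range f).Nonempty) :
    range f ⊆ closedBall z (c * diam (univ : Set X) + ρ) := by
  obtain ⟨_, hyV, y, rfl⟩ := hVf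
  rintro _ ⟨x, rfl⟩
  have hxy : dist x y ≤ diam (univ : Set X) :=
    dist_le_diam_of_mem isCompact_univ.isBounded (mem_univ x) (mem_univ y)
  have hyz : dist (f y) z ≤ ρ := by
    rw [← ENNReal.ofReal_le_ofReal_iff hρ, ← edist_dist]
    exact edist_le_of_ediam_le hyV hz hV
  calc dist (f x) z ≤ dist (f x) (f y) + dist (f y) z := dist_triangle _ _ _
    _ ≤ c * diam (univ : Set X) + ρ := by rw [hf]; gcongr

end Similarity

section Measure

theorem card_nsmul_le_measure_of_pairwiseDisjoint {α ι : Type*} [MeasurableSpace α]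
    (μ : Measure α) {W : Finset ι} {A : ι → Set α} {B : Set α} {m : ENNReal}
    (hdisj : (W : Set ι).PairwiseDisjoint A)
    (hmeas : ∀ i ∈ W, MeasurableSet (A i)) (hm : ∀ i ∈ W, m ≤ μ (A i))
    (hB : ∀ i ∈ W, A i ⊆ B) : W.card • m ≤ μ B :=
  calc W.card • m ≤ ∑ i ∈ W, μ (A i) := Finset.card_nsmul_le_sum W _ m hm
    _ = μ (⋃ i ∈ W, A i) := (measure_biUnion_finset hdisj hmeas).symm
    _ ≤ μ B := measure_mono (iUnion₂_subset hB)

variable {X : Type*} [MetricSpace X] [MeasurableSpace X] [CompactSpace X]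

theorem measure_univ_lt_top_of_ball (μ : Measure X) {ε : ℝ} (hε : 0 < ε)
    (h : ∀ x, μ (ball x ε) < ⊤) : μ univ < ⊤ := by
  have : IsLocallyFiniteMeasure μ := ⟨fun x => ⟨ball x ε, ball_mem_nhds x hε, h x⟩⟩
  exact measure_lt_top μ univ

theorem exists_measure_ball_le_rpow (μ : Measure X) {d lam : ℝ} (hd : 0 ≤ d) (hlam : 0 < lam)
    (hD : 0 < diam (univ : Set X))
    (hup : ∀ x ρ, 0 < ρ → ρ ≤ diam (univ : Set X) →
      μ (ball x ρ) ≤ ENNReal.ofReal (lam * ρ ^ d)) :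
    ∃ L > 0, ∀ x R, 0 < R → μ (ball x R) ≤ ENNReal.ofReal (L * R ^ d) := by
  set D := diam (univ : Set X)
  have hfin := measure_univ_lt_top_of_ball μ hD fun x =>
    (hup x D hD le_rfl).trans_lt ENNReal.ofReal_lt_top
  refine ⟨lam + μ.real univ / D ^ d, by positivity, fun x R hR => ?_⟩
  rcases le_or_gt R D with hRD | hRD
  · refine (hup x R hR hRD).trans (ENNReal.ofReal_le_ofReal ?_)
    gcongr
    exact le_add_of_nonneg_right (by positivity)
  · calc μ (ball x R) ≤ μ univ := measure_mono (subset_univ _)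
      _ = ENNReal.ofReal (μ.real univ / D ^ d * D ^ d) := by
        rw [div_mul_cancel₀ _ (by positivity), ofReal_measureReal hfin.ne]
      _ ≤ ENNReal.ofReal ((lam + μ.real univ / D ^ d) * R ^ d) := by
        gcongr
        exact le_add_of_nonneg_left hlam.le

theorem exists_isCompact_subset_ofReal_le_measure (μ : Measure X) {d lam : ℝ} (hlam : 0 < lam)
    (hD : 0 < diam (univ : Set X))
    (hlow : ∀ x ρ, 0 < ρ → ρ ≤ diam (univ : Set X) →
      ENNReal.ofReal (lam⁻¹ * ρ ^ d) ≤ μ (ball x ρ))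
    {U : Set X} (hU : IsOpen U) (hUne : U.Nonempty) :
    ∃ K ⊆ U, IsCompact K ∧ ∃ a > 0, ENNReal.ofReal a ≤ μ K := by
  obtain ⟨u, hu⟩ := hUne
  obtain ⟨η, hη, hηU⟩ := isOpen_iff.1 hU u hu
  obtain ⟨ρ, hρ, hρη, hρD⟩ : ∃ ρ, 0 < ρ ∧ ρ < η ∧ ρ ≤ diam (univ : Set X) :=
    ⟨min η (diam univ) / 2, by positivity, by linarith [min_le_left η (diam (univ : Set X))],
      by linarith [min_le_right η (diam (univ : Set X))]⟩
  exact ⟨closedBall u ρ, (closedBall_subset_ball hρη).trans hηU, isCompact_closedBall u ρ,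
    lam⁻¹ * ρ ^ d, by positivity, (hlow u ρ hρ hρD).trans (measure_mono ball_subset_closedBall)⟩

end Measure

section Packing

variable {X : Type*} [MetricSpace X] [MeasurableSpace X] [BorelSpace X]
  (μ : Measure X) [IsFiniteMeasure μ] {d lam : ℝ}

theorem ncard_mul_le_of_isSeparated {ε : NNReal} (hε : 0 < ε)
    (hεD : (ε : ℝ) / 2 ≤ diam (univ : Set X))
    (hlow : ∀ x ρ, 0 < ρ → ρ ≤ diam (univ : Set X) →
      ENNReal.ofReal (lam⁻¹ * ρ ^ d) ≤ μ (ball x ρ))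
    {T : Set X} (hT : T.Finite) (hsep : IsSeparated ε T) :
    T.ncard * (lam⁻¹ * ((ε : ℝ) / 2) ^ d) ≤ μ.real univ := by
  have hdisj : (hT.toFinset : Set X).PairwiseDisjoint fun x => ball x ((ε : ℝ) / 2) := by
    intro x hx y hy hxy
    refine disjoint_left.2 fun z hzx hzy =>
      (hsep (by simpa using hx) (by simpa using hy) hxy).not_gt ?_
    rw [edist_lt_coe, ← NNReal.coe_lt_coe, coe_nndist]
    have hzx : dist z x < ε / 2 := hzx
    have hzy : dist z y < ε / 2 := hzy
    linarith [dist_triangle_left x y z]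
  have hpack := card_nsmul_le_measure_of_pairwiseDisjoint μ hdisj
    (fun x _ => isOpen_ball.measurableSet) (fun x _ => hlow x _ (by positivity) hεD)
    (fun _ _ => subset_univ _)
  rw [nsmul_eq_mul, ← ENNReal.ofReal_natCast, ← ENNReal.ofReal_mul (Nat.cast_nonneg _),
    ← ofReal_measureReal (measure_ne_top μ univ), ← Set.ncard_eq_toFinset_card T hT] at hpack
  exact (ENNReal.ofReal_le_ofReal_iff measureReal_nonneg).1 hpack

theorem packingNumber_le_floor {ε : NNReal} (hε : 0 < ε) (hlam : 0 < lam)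
    (hεD : (ε : ℝ) / 2 ≤ diam (univ : Set X))
    (hlow : ∀ x ρ, 0 < ρ → ρ ≤ diam (univ : Set X) →
      ENNReal.ofReal (lam⁻¹ * ρ ^ d) ≤ μ (ball x ρ)) :
    packingNumber ε (univ : Set X) ≤ ⌊μ.real univ / (lam⁻¹ * ((ε : ℝ) / 2) ^ d)⌋₊ := by
  refine iSup_le fun T => iSup_le fun _ => iSup_le fun hsep => ?_
  by_contra! h
  obtain ⟨T', hT'T, hT'⟩ := exists_subset_encard_eq (Order.add_one_le_of_lt h)
  have hfin : T'.Finite := finite_of_encard_eq_coe (by rw [hT']; rfl)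
  have hcard := ncard_mul_le_of_isSeparated μ hε hεD hlow hfin (hsep.subset hT'T)
  rw [← le_div_iff₀ (by positivity)] at hcard
  have : (T'.ncard : ℕ∞) = ⌊μ.real univ / (lam⁻¹ * ((ε : ℝ) / 2) ^ d)⌋₊ + 1 := by
    rw [hfin.cast_ncard_eq, hT']
  norm_cast at this
  rw [this] at hcard
  exact (Nat.lt_floor_add_one _).not_ge (by exact_mod_cast hcard)

theorem coverN_univ_le (hlam : 0 < lam)
    (hlow : ∀ x ρ, 0 < ρ → ρ ≤ diam (univ : Set X) →
      ENNReal.ofReal (lam⁻¹ * ρ ^ d) ≤ μ (ball x ρ))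
    {δ : ℝ} (hδ : 0 < δ) (hδD : δ ≤ 4 * diam (univ : Set X)) :
    (coverN (univ : Set X) δ : ℝ) ≤ μ.real univ * lam * 4 ^ d * δ ^ (-d) := by
  set ε : NNReal := ⟨δ / 2, by positivity⟩
  have hε : (ε : ℝ) = δ / 2 := rfl
  have hpack := packingNumber_le_floor μ (ε := ε) (by rw [← NNReal.coe_pos, hε]; positivity) hlam
    (by rw [hε]; linarith) hlow
  obtain ⟨T, -, hT, hcov, hTcard⟩ := exists_set_encard_eq_coveringNumber
    ((coveringNumber_le_packingNumber ε univ).trans hpack |>.trans_lt (ENat.natCast_lt_top _)).ne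
  have hcovN : coverN (univ : Set X) δ ≤ T.ncard := by
    rw [ncard_eq_toFinset_card T hT]
    refine coverN_le_card (V := fun y => closedBall y (δ / 2)) (fun y _ => ?_) ?_
    · simpa [mul_div_cancel₀] using ediam_closedBall_le y (ε := δ / 2)
    · simpa [hε] using isCover_iff_subset_iUnion_closedBall.1 hcov
  have hTle : (T.ncard : ℕ∞) ≤ _ := (hT.cast_ncard_eq.trans hTcard).trans_le
    ((coveringNumber_le_packingNumber ε univ).trans hpack)
  norm_cast at hTle
  calc (coverN (univ : Set X) δ : ℝ) ≤ T.ncard := by exact_mod_cast hcovN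
    _ ≤ μ.real univ / (lam⁻¹ * ((ε : ℝ) / 2) ^ d) :=
        (Nat.cast_le.2 hTle).trans (Nat.floor_le (by positivity))
    _ = μ.real univ * lam * 4 ^ d * δ ^ (-d) := by
        rw [hε, div_div, Real.div_rpow hδ.le (by norm_num), Real.rpow_neg hδ.le]
        field_simp
        norm_num

end Packing

theorem exists_coverN_le_rpow {X : Type*} [MetricSpace X] [CompactSpace X] [MeasurableSpace X]
    [BorelSpace X] {d lam : ℝ} (hd : 0 ≤ d) (hlam : 0 < lam)
    (hreg : ∀ (x : X) (ρ : ℝ), 0 < ρ → ρ ≤ diam (univ : Set X) →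
      ENNReal.ofReal (lam⁻¹ * ρ ^ d) ≤ μH[d] (ball x ρ) ∧
      μH[d] (ball x ρ) ≤ ENNReal.ofReal (lam * ρ ^ d)) (A : Set X) :
    ∃ K > 0, ∀ᶠ δ in 𝓝[>] 0, (coverN A δ : ℝ) ≤ K * δ ^ (-d) := by
  rcases subsingleton_or_nontrivial X with hX | hX
  · refine ⟨1, one_pos, ?_⟩
    filter_upwards [Ioc_mem_nhdsGT one_pos] with δ ⟨hδ0, hδ1⟩
    rw [one_mul]
    exact le_trans (by exact_mod_cast coverN_le_one_of_subsingleton)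
      (Real.one_le_rpow_of_pos_of_le_one_of_nonpos hδ0 hδ1 (neg_nonpos.2 hd))
  · have hD : 0 < diam (univ : Set X) := diam_pos nontrivial_univ isCompact_univ.isBounded
    have : IsFiniteMeasure (μH[d] : Measure X) := ⟨measure_univ_lt_top_of_ball _ hD fun x =>
      ((hreg x _ hD le_rfl).2).trans_lt ENNReal.ofReal_lt_top⟩
    refine ⟨max 1 ((μH[d] : Measure X).real univ * lam * 4 ^ d), by positivity, ?_⟩
    filter_upwards [Ioo_mem_nhdsGT hD] with δ ⟨hδ0, hδD⟩
    calc (coverN A δ : ℝ) ≤ coverN (univ : Set X) δ := by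
          exact_mod_cast coverN_mono isCompact_univ hδ0 (subset_univ A)
      _ ≤ (μH[d] : Measure X).real univ * lam * 4 ^ d * δ ^ (-d) :=
          coverN_univ_le _ hlam (fun x ρ h₁ h₂ => (hreg x ρ h₁ h₂).1) hδ0 (by linarith)
      _ ≤ _ := by gcongr; exact le_max_right _ _

section SelfSimilar

variable {ι X : Type*} [Fintype ι] {S : ι → X → X} {r : ι → ℝ} {s : ℝ}

theorem nonneg_of_sum_rpow_eq_one (hr : ∀ i, r i ∈ Ioo 0 1) (hsum : ∑ i, r i ^ s = 1) :
    0 ≤ s := by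
  by_contra! hs
  obtain ⟨i, -⟩ := Finset.nonempty_of_sum_ne_zero (hsum ▸ one_ne_zero : ∑ i, r i ^ s ≠ 0)
  have hi : 1 < r i ^ s := Real.one_lt_rpow_of_pos_of_lt_one_of_neg (hr i).1 (hr i).2 hs
  have := Finset.single_le_sum (fun j _ => (Real.rpow_pos_of_pos (hr j).1 s).le)
    (Finset.mem_univ i)
  linarith

theorem eq_zero_of_sum_rpow_eq_one_of_subsingleton [Subsingleton X] (hr : ∀ i, r i ∈ Ioo 0 1)
    (hsum : ∑ i, r i ^ s = 1) {U : Set X} (hU : U.Nonempty)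
    (hdisj : Pairwise fun i j => Disjoint (S i '' U) (S j '' U)) : s = 0 := by
  obtain ⟨u, hu⟩ := hU
  have : Subsingleton ι := ⟨fun i j => by_contra fun hij =>
    (hdisj hij).ne_of_mem (mem_image_of_mem _ hu) (mem_image_of_mem _ hu) (Subsingleton.elim _ _)⟩
  obtain ⟨i, -⟩ := Finset.nonempty_of_sum_ne_zero (hsum ▸ one_ne_zero : ∑ i, r i ^ s ≠ 0)
  rw [Fintype.sum_subsingleton _ i, ← Real.rpow_zero (r i)] at hsum
  exact (Real.rpow_right_inj (hr i).1 (hr i).2.ne).1 hsum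

variable [MetricSpace X] [DecidableEq ι]

theorem pairwise_disjoint_wordMap_image_cutSet (hr : ∀ i, 0 < r i)
    (hS : ∀ i x y, dist (S i x) (S i y) = r i * dist x y) {U : Set X} (hU : ∀ i, MapsTo (S i) U U)
    (hdisj : Pairwise fun i j => Disjoint (S i '' U) (S j '' U)) :
    ∀ n θ, (cutSet r n θ : Set (List ι)).Pairwise fun w w' =>
      Disjoint (wordMap S w '' U) (wordMap S w' '' U)
  | 0, θ => by
    rcases le_or_gt 1 θ with h | h
    · simp [cutSet_of_one_le h]
    · simp [cutSet, h.not_ge]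
  | n + 1, θ => by
    rcases le_or_gt 1 θ with h | h
    · simp [cutSet_of_one_le h]
    rw [cutSet_succ_of_lt_one h]
    simp only [Finset.coe_biUnion, Finset.coe_image, Finset.coe_univ, mem_univ, iUnion_true]
    rintro _ hw _ hw' hne
    obtain ⟨i, u, hu, rfl⟩ : ∃ i u, u ∈ cutSet r n (θ / r i) ∧ i :: u = _ := by simpa using hw
    obtain ⟨j, v, hv, rfl⟩ : ∃ j v, v ∈ cutSet r n (θ / r j) ∧ j :: v = _ := by simpa using hw'
    simp only [wordMap_cons, image_comp]
    by_cases hij : i = j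
    · subst hij
      exact (disjoint_image_iff (antilipschitzWith_of_dist_eq (hr i) (hS i)).injective).2 <|
        pairwise_disjoint_wordMap_image_cutSet hr hS hU hdisj n _ hu hv fun h => hne (h ▸ rfl)
    · exact (hdisj hij).mono (image_mono ((mapsTo_wordMap hU u).image_subset))
        (image_mono ((mapsTo_wordMap hU v).image_subset))

end SelfSimilar

section Counting

variable {ι X : Type*} [MetricSpace X] [CompactSpace X]
  [MeasurableSpace X] [BorelSpace X] {S : ι → X → X} {r : ι → ℝ} {d : ℝ}

theorem card_mul_le_of_forall_inter_range_nonempty (hr : ∀ i, 0 < r i)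
    (hS : ∀ i x y, dist (S i x) (S i y) = r i * dist x y) (hd : 0 ≤ d) {L : ℝ} (hL0 : 0 ≤ L)
    (hL : ∀ (z : X) R, 0 < R → μH[d] (ball z R) ≤ ENNReal.ofReal (L * R ^ d))
    {K U : Set X} (hKU : K ⊆ U) (hK : IsCompact K) {a : ℝ} (ha : ENNReal.ofReal a ≤ μH[d] K)
    {κ ρ : ℝ} (hκ : 0 < κ) (hρ : 0 < ρ) {W : Finset (List ι)}
    (hW : (W : Set (List ι)).Pairwise fun w w' =>
      Disjoint (wordMap S w '' U) (wordMap S w' '' U))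
    (hWr : ∀ w ∈ W, ρ ≤ wordRatio r w ∧ wordRatio r w ≤ ρ / κ)
    {V : Set X} (hV : ediam V ≤ ENNReal.ofReal ρ)
    (hVW : ∀ w ∈ W, (V ∩ range (wordMap S w)).Nonempty) :
    W.card * a ≤ L * (diam (univ : Set X) / κ + 2) ^ d := by
  rcases W.eq_empty_or_nonempty with rfl | ⟨w₀, hw₀⟩
  · simpa using by positivity
  obtain ⟨z, hzV, -⟩ := hVW w₀ hw₀
  set D := diam (univ : Set X)
  set R := ρ * (D / κ + 2)
  have hpiece : ∀ w ∈ W, wordMap S w '' K ⊆ ball z R := fun w hw => by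
    refine (image_subset_range _ _).trans <| (range_subset_closedBall_of_dist_eq
      (dist_wordMap hS w) (wordRatio_pos hr w).le hρ.le hV hzV (hVW w hw)).trans
      (closedBall_subset_ball ?_)
    have : wordRatio r w * D ≤ ρ / κ * D := by gcongr; exact (hWr w hw).2
    have : ρ / κ * D + ρ < R := by simp only [R]; field_simp; nlinarith
    linarith
  have hmeas : ∀ w ∈ W, ENNReal.ofReal (ρ ^ d * a) ≤ μH[d] (wordMap S w '' K) := fun w hw =>
    calc ENNReal.ofReal (ρ ^ d * a) ≤ ENNReal.ofReal (wordRatio r w ^ d) * μH[d] K := by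
          rw [ENNReal.ofReal_mul (by positivity)]
          gcongr
          exact (hWr w hw).1
      _ ≤ μH[d] (wordMap S w '' K) :=
          ofReal_rpow_mul_hausdorffMeasure_le (wordRatio_pos hr w) hd (dist_wordMap hS w) K
  have hpack := card_nsmul_le_measure_of_pairwiseDisjoint μH[d]
    (fun w hw w' hw' h => (hW hw hw' h).mono (image_mono hKU) (image_mono hKU))
    (fun w _ => (hK.image (lipschitzWith_of_dist_eq (wordRatio_pos hr w).le
      (dist_wordMap hS w)).continuous).isClosed.measurableSet) hmeas hpiece
  rw [nsmul_eq_mul, ← ENNReal.ofReal_natCast, ← ENNReal.ofReal_mul (Nat.cast_nonneg _)] at hpack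
  have hcount :=
    (ENNReal.ofReal_le_ofReal_iff (by positivity)).1 (hpack.trans (hL z R (by positivity)))
  rw [Real.mul_rpow hρ.le (by positivity)] at hcount
  have hρd : 0 < ρ ^ d := Real.rpow_pos_of_pos hρ d
  nlinarith

theorem card_mul_coverN_le_coverN_mul (hr : ∀ i, 0 < r i)
    (hS : ∀ i x y, dist (S i x) (S i y) = r i * dist x y) (hd : 0 ≤ d) {L : ℝ} (hL0 : 0 ≤ L)
    (hL : ∀ (z : X) R, 0 < R → μH[d] (ball z R) ≤ ENNReal.ofReal (L * R ^ d))
    {K U : Set X} (hKU : K ⊆ U) (hK : IsCompact K) {a : ℝ} (ha : 0 < a)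
    (haK : ENNReal.ofReal a ≤ μH[d] K) {κ : ℝ} (hκ : 0 < κ) {Λ : Finset (List ι)}
    (hΛ : (Λ : Set (List ι)).Pairwise fun w w' =>
      Disjoint (wordMap S w '' U) (wordMap S w' '' U))
    {δ ρ : ℝ} (hδ : 0 < δ) (hδρ : δ ≤ ρ)
    (hΛr : ∀ w ∈ Λ, ρ ≤ wordRatio r w ∧ wordRatio r w ≤ ρ / κ)
    {C F : Set X} (hF : IsCompact F) (hFS : ∀ i, MapsTo (S i) F F) (hCF : C ⊆ F) :
    Λ.card * (coverN C (δ / ρ) : ℝ) ≤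
      coverN F δ * (L * (diam (univ : Set X) / κ + 2) ^ d / a) := by
  classical
  have hρ : 0 < ρ := hδ.trans_le hδρ
  obtain ⟨V, hVd, hVcov⟩ := exists_fin_cover_coverN hF hδ
  let meets : List ι → Fin (coverN F δ) → Prop := fun w k => (V k ∩ wordMap S w '' C).Nonempty
  have habove : ∀ w ∈ Λ, (coverN C (δ / ρ) : ℝ) ≤ (Finset.univ.bipartiteAbove meets w).card :=
    fun w hw => by
      refine Nat.cast_le.2 (coverN_le_card_filter_of_antilipschitz
        (antilipschitzWith_of_dist_eq (wordRatio_pos hr w) (dist_wordMap hS w)) ?_ hVd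
        (((mapsTo_wordMap hFS w).mono_left hCF).image_subset.trans hVcov))
      rw [Real.coe_toNNReal _ (inv_nonneg.2 (wordRatio_pos hr w).le), inv_mul_eq_div]
      exact div_le_div_of_nonneg_left hδ.le hρ (hΛr w hw).1
  have hbelow : ∀ k ∈ Finset.univ, ((Λ.bipartiteBelow meets k).card : ℝ) ≤
      L * (diam (univ : Set X) / κ + 2) ^ d / a := fun k _ => by
    rw [le_div_iff₀ ha]
    refine card_mul_le_of_forall_inter_range_nonempty hr hS hd hL0 hL hKU hK haK hκ hρ
      (hΛ.mono (Finset.coe_subset.2 (Finset.filter_subset _ _)))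
      (fun w hw => hΛr w (Finset.mem_filter.1 hw).1)
      ((hVd k).trans (ENNReal.ofReal_le_ofReal hδρ)) fun w hw => ?_
    obtain ⟨x, hxV, y, -, rfl⟩ := (Finset.mem_filter.1 hw).2
    exact ⟨_, hxV, y, rfl⟩
  simpa using Finset.card_nsmul_le_card_nsmul meets habove hbelow

theorem exists_mul_rpow_mul_coverN_le_coverN [Fintype ι] [DecidableEq ι] [Nontrivial X]
    {s lam : ℝ} (hr : ∀ i, r i ∈ Ioo 0 1) (hS : ∀ i x y, dist (S i x) (S i y) = r i * dist x y)
    (hsum : ∑ i, r i ^ s = 1) (hd : 0 ≤ d) (hlam : 0 < lam)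
    (hreg : ∀ (x : X) (ρ : ℝ), 0 < ρ → ρ ≤ diam (univ : Set X) →
      ENNReal.ofReal (lam⁻¹ * ρ ^ d) ≤ μH[d] (ball x ρ) ∧
      μH[d] (ball x ρ) ≤ ENNReal.ofReal (lam * ρ ^ d))
    {U : Set X} (hU : IsOpen U) (hUne : U.Nonempty) (hUS : ∀ i, MapsTo (S i) U U)
    (hdisj : Pairwise fun i j => Disjoint (S i '' U) (S j '' U))
    {C F : Set X} (hF : IsCompact F) (hFS : ∀ i, MapsTo (S i) F F) (hCF : C ⊆ F) :
    ∃ c > 0, ∀ δ ρ, 0 < δ → δ ≤ ρ → ρ ≤ 1 →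
      c * ρ ^ (-s) * (coverN C (δ / ρ) : ℝ) ≤ coverN F δ := by
  have hr0 : ∀ i, 0 < r i := fun i => (hr i).1
  have : Nonempty ι := Finset.univ_nonempty_iff.1
    (Finset.nonempty_of_sum_ne_zero (hsum ▸ one_ne_zero : ∑ i, r i ^ s ≠ 0))
  obtain ⟨i₀, hi₀⟩ := Finite.exists_min r
  obtain ⟨i₁, hi₁⟩ := Finite.exists_max r
  have hD : 0 < diam (univ : Set X) := diam_pos nontrivial_univ isCompact_univ.isBounded
  obtain ⟨L, hL0, hL⟩ := exists_measure_ball_le_rpow μH[d] hd hlam hD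
    fun x ρ h₁ h₂ => (hreg x ρ h₁ h₂).2
  obtain ⟨K, hKU, hK, a, ha, haK⟩ := exists_isCompact_subset_ofReal_le_measure μH[d] hlam hD
    (fun x ρ h₁ h₂ => (hreg x ρ h₁ h₂).1) hU hUne
  set m := L * (diam (univ : Set X) / r i₀ + 2) ^ d / a
  have hm : 0 < m := by have := hr0 i₀; positivity
  refine ⟨r i₀ ^ s / m, div_pos (Real.rpow_pos_of_pos (hr0 i₀) s) hm, fun δ ρ hδ hδρ hρ1 => ?_⟩
  have hρ : 0 < ρ := hδ.trans_le hδρ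
  obtain ⟨n, hn⟩ := exists_pow_lt_of_lt_one (div_pos hρ (hr0 i₀)) (hr i₁).2
  have hcount := card_mul_coverN_le_coverN_mul hr0 hS hd hL0.le hL hKU hK ha haK (hr0 i₀)
    (pairwise_disjoint_wordMap_image_cutSet hr0 hS hUS hdisj n _) hδ hδρ
    (fun w hw => wordRatio_mem_Icc_of_mem_cutSet hr0 (hr0 i₀) hi₀ hρ1 hw) hF hFS hCF
  calc r i₀ ^ s / m * ρ ^ (-s) * (coverN C (δ / ρ) : ℝ)
      = (ρ / r i₀) ^ (-s) * coverN C (δ / ρ) / m := by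
        rw [Real.div_rpow hρ.le (hr0 i₀).le, Real.rpow_neg (hr0 i₀).le]
        field_simp
    _ ≤ (cutSet r n (ρ / r i₀)).card * coverN C (δ / ρ) / m := by
        gcongr
        exact rpow_neg_le_card_cutSet hr0 hi₁ hsum (nonneg_of_sum_rpow_eq_one hr hsum)
          (div_pos hρ (hr0 i₀)) hn
    _ ≤ coverN F δ := by rwa [div_le_iff₀ hm]

end Counting

theorem lower_box_dim_inhomogeneous_lower_bound_general
    {X : Type*} [MetricSpace X] [CompactSpace X] {N : ℕ}
    (S : Fin N → X → X) (r : Fin N → ℝ)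
    (hr : ∀ i, r i ∈ Set.Ioo (0 : ℝ) 1)
    (hS : ∀ i x y, dist (S i x) (S i y) = r i * dist x y)
    (s : ℝ) (hs : ∑ i, r i ^ s = 1)
    [MeasurableSpace X] [BorelSpace X]
    (dH lam : ℝ) (hdH : 0 ≤ dH) (hlam : 0 < lam)
    (hreg : ∀ (x : X) (ρ : ℝ), 0 < ρ → ρ ≤ Metric.diam (Set.univ : Set X) →
      ENNReal.ofReal (lam⁻¹ * ρ ^ dH) ≤ μH[dH] (Metric.ball x ρ) ∧
      μH[dH] (Metric.ball x ρ) ≤ ENNReal.ofReal (lam * ρ ^ dH))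
    (C : Set X) (hC : IsCompact C) (hCne : C.Nonempty)
    (F0 : Set X)
    (FC : Set X) (hFCc : IsCompact FC) (hFCne : FC.Nonempty)
    (hFC : FC = (⋃ i, S i '' FC) ∪ C)
    (hCOSC : ∃ U : Set X, IsOpen U ∧ U.Nonempty ∧ (F0 ∩ U).Nonempty ∧
      (⋃ i, S i '' U) ⊆ U ∧ (Pairwise fun i j => Disjoint (S i '' U) (S j '' U)) ∧
      C ⊆ closure U)
 :
    ∀ t : ℝ, 0 ≤ t → creT C t * t + (1 - creT C t) * s ≤ lbDim FC := by
  obtain ⟨U, hU, hUne, -, hUS, hdisj, -⟩ := hCOSC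
  obtain ⟨hFS, hCF⟩ := union_subset_iff.1 hFC.symm.subset
  obtain ⟨K, hK, hup⟩ := exists_coverN_le_rpow hdH hlam hreg FC
  obtain ⟨c, hc, hcount⟩ : ∃ c > 0, ∀ δ ρ, 0 < δ → δ ≤ ρ → ρ ≤ 1 →
      c * ρ ^ (-s) * (coverN C (δ / ρ) : ℝ) ≤ coverN FC δ := by
    rcases subsingleton_or_nontrivial X with hX | hX
    · -- Ahlfors regularity is vacuous on a point, but the open set condition forces `s = 0`.
      refine ⟨1, one_pos, fun δ ρ hδ _ _ => ?_⟩
      rw [eq_zero_of_sum_rpow_eq_one_of_subsingleton hr hs hUne hdisj, neg_zero, Real.rpow_zero,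
        one_mul, one_mul]
      exact_mod_cast coverN_le_one_of_subsingleton.trans (one_le_coverN hFCc hFCne hδ)
    · exact exists_mul_rpow_mul_coverN_le_coverN hr hS hs hdH hlam hreg hU hUne
        (fun i => mapsTo_iff_image_subset.2 ((subset_iUnion _ i).trans hUS)) hdisj hFCc
        (fun i => mapsTo_iff_image_subset.2 ((subset_iUnion _ i).trans hFS)) hCF
  exact fun t _ => creT_mul_add_le_lbDim hC hCne hK hup hc hcount t

theorem lower_box_dim_inhomogeneous_lower_bound
    {X : Type*} [MetricSpace X] [CompactSpace X] {N : ℕ} (hN : 0 < N)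
    (S : Fin N → X → X) (r : Fin N → ℝ)
    (hr : ∀ i, r i ∈ Set.Ioo (0 : ℝ) 1)
    (hS : ∀ i x y, dist (S i x) (S i y) = r i * dist x y)
    (s : ℝ) (hs : ∑ i, r i ^ s = 1)
    [MeasurableSpace X] [BorelSpace X]
    (dH lam : ℝ) (hdH : 0 ≤ dH) (hlam : 0 < lam)
    (hdimX : dimH (Set.univ : Set X) = ENNReal.ofReal dH)
    (hreg : ∀ (x : X) (ρ : ℝ), 0 < ρ → ρ ≤ Metric.diam (Set.univ : Set X) →
      ENNReal.ofReal (lam⁻¹ * ρ ^ dH) ≤ μH[dH] (Metric.ball x ρ) ∧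
      μH[dH] (Metric.ball x ρ) ≤ ENNReal.ofReal (lam * ρ ^ dH))
    (C : Set X) (hC : IsCompact C) (hCne : C.Nonempty)
    (F0 : Set X) (hF0c : IsCompact F0) (hF0ne : F0.Nonempty)
    (hF0 : F0 = ⋃ i, S i '' F0)
    (FC : Set X) (hFCc : IsCompact FC) (hFCne : FC.Nonempty)
    (hFC : FC = (⋃ i, S i '' FC) ∪ C)
    (hCOSC : ∃ U : Set X, IsOpen U ∧ U.Nonempty ∧ (F0 ∩ U).Nonempty ∧
      (⋃ i, S i '' U) ⊆ U ∧ (Pairwise fun i j => Disjoint (S i '' U) (S j '' U)) ∧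
      C ⊆ closure U)
 :
    ∀ t : ℝ, 0 ≤ t → creT C t * t + (1 - creT C t) * s ≤ lbDim FC :=
  lower_box_dim_inhomogeneous_lower_bound_general S r hr hS s hs dH lam hdH hlam hreg C hC hCne F0
    FC hFCc hFCne hFC hCOSC
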